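/- There exists a universal constant C > 0 such that for all integers n, k, t, j with k ≥ 1, n ≥ 5k, t ≥ 1, 5t ≤ k, 0 ≤ j ≤ k, and every real ε with 1/k ≤ ε ≤ 1 and k' = (1+ε)k, the following holds. Set γ_i = max(1 − i/t, 0) for 0 ≤ i ≤ k, γ_{−1} = 0, γ_{k+1} = 0, and define the vectors in ℝ⁴: φ̃_j = (γ_{j−1}φ_{j,0}(k), γ_jφ_{j,1}(k), γ_jφ_{j,2}(k), γ_{j+1}φ_{j,3}(k)) and φ̃'_j = (γ_{j−1}φ_{j,0}(k'), γ_jφ_{j,1}(k'), γ_jφ_{j,2}(k'), γ_{j+1}φ_{j,3}(k')). Then ‖φ̃'_j − γ_j·φ_j‖ ≤ C·( ε·sqrt(k/n) + ε·sqrt(t/k) + 1/t ) and ‖γ_j·φ'_j − φ̃_j‖ ≤ C·( ε·sqrt(k/n) + ε·sqrt(t/k) + 1/t ), where ‖·‖ is the Euclidean norm on ℝ⁴. -/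

import Mathlib

/-- `φ_{j,0}(κ) = sqrt(j(κ−j+1)(n−κ−j+1)/((n−2j+2)(n−2j+1)κ))` -/
noncomputable def phi0 (n j : ℤ) (κ : ℝ) : ℝ :=
  Real.sqrt (((j : ℝ) * (κ - (j : ℝ) + 1) * ((n : ℝ) - κ - (j : ℝ) + 1)) /
    (((n : ℝ) - 2 * (j : ℝ) + 2) * ((n : ℝ) - 2 * (j : ℝ) + 1) * κ))

/-- `φ_{j,1}(κ) = sqrt(κ/n)` -/
noncomputable def phi1 (n : ℤ) (κ : ℝ) : ℝ := Real.sqrt (κ / (n : ℝ))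

/-- `φ_{j,2}(κ) = ((n−2κ)/sqrt(nκ))·sqrt(j(n−j+1)/((n−2j+2)(n−2j)))` -/
noncomputable def phi2 (n j : ℤ) (κ : ℝ) : ℝ :=
  (((n : ℝ) - 2 * κ) / Real.sqrt ((n : ℝ) * κ)) *
    Real.sqrt (((j : ℝ) * ((n : ℝ) - (j : ℝ) + 1)) /
      (((n : ℝ) - 2 * (j : ℝ) + 2) * ((n : ℝ) - 2 * (j : ℝ))))

/-- `φ_{j,3}(κ) = sqrt((n−j+1)(κ−j)(n−κ−j)/((n−2j+1)(n−2j)κ))` -/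
noncomputable def phi3 (n j : ℤ) (κ : ℝ) : ℝ :=
  Real.sqrt ((((n : ℝ) - (j : ℝ) + 1) * (κ - (j : ℝ)) * ((n : ℝ) - κ - (j : ℝ))) /
    (((n : ℝ) - 2 * (j : ℝ) + 1) * ((n : ℝ) - 2 * (j : ℝ)) * κ))


/-- The coefficients `γ_i = max(1 − i/t, 0)` for `0 ≤ i ≤ k`, with `γ_{−1} = 0` and
`γ_{k+1} = 0` (encoded by value `0` outside `0 ≤ i ≤ k`). -/
noncomputable def gammaCoeff (k t : ℤ) (i : ℤ) : ℝ :=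
  if 0 ≤ i ∧ i ≤ k then max (1 - (i : ℝ) / (t : ℝ)) 0 else 0

/-- The vector `φ_j(κ) ∈ ℝ⁴`. -/
noncomputable def phiVec (n j : ℤ) (κ : ℝ) : EuclideanSpace ℝ (Fin 4) :=
  (WithLp.equiv 2 (Fin 4 → ℝ)).symm ![phi0 n j κ, phi1 n κ, phi2 n j κ, phi3 n j κ]

/-- The vector `φ̃_j(κ) = (γ_{j−1}φ_{j,0}(κ), γ_jφ_{j,1}(κ), γ_jφ_{j,2}(κ), γ_{j+1}φ_{j,3}(κ))`. -/
noncomputable def phiTildeVec (n k t j : ℤ) (κ : ℝ) : EuclideanSpace ℝ (Fin 4) :=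
  (WithLp.equiv 2 (Fin 4 → ℝ)).symm
    ![gammaCoeff k t (j - 1) * phi0 n j κ, gammaCoeff k t j * phi1 n κ,
      gammaCoeff k t j * phi2 n j κ, gammaCoeff k t (j + 1) * phi3 n j κ]

/-!
Each `φ_{j,i}(κ)` is the square root of a quantity whose relative change between `κ = k` and
`κ = (1+ε)k` is `O(ε(k/n + j/k))` for `i = 0, 3`, exactly `ε` for `i = 1` and `O(ε)` for `i = 2`;
and `|√a - √b| ≤ δ √b` whenever `|a - b| ≤ δ b`. As `φ_{j,0}, φ_{j,3} = O(1)`,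
`φ_{j,1}(k) = √(k/n)` and `φ_{j,2}(k) = O(√(j/k))`, while `γ_j = 0` unless `j < t`, the
`γ_j`-weighted differences are `O(ε√(k/n) + ε√(t/k))`. Replacing `γ_{j±1}` by `γ_j` costs `O(1/t)`,
since `γ` is `1/t`-Lipschitz on `i ≥ 0` (`γ_k = 0` because `t ≤ k`) and `φ_{0,0} = 0`.
-/

theorem abs_sqrt_sub_sqrt_le_mul_sqrt {a b δ : ℝ} (ha : 0 ≤ a) (hb : 0 ≤ b)
    (h : |a - b| ≤ δ * b) : |√a - √b| ≤ δ * √b := by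
  rcases hb.eq_or_lt with rfl | hb
  · simp_all
  have hsum : 0 < √a + √b := by positivity
  have hδ : 0 ≤ δ := nonneg_of_mul_nonneg_left ((abs_nonneg _).trans h) hb
  have hprod : |√a - √b| * (√a + √b) = |a - b| := by
    rw [← abs_of_pos hsum, ← abs_mul]
    congr 1
    linear_combination Real.sq_sqrt ha - Real.sq_sqrt hb.le
  refine le_of_mul_le_mul_right ?_ hsum
  calc |√a - √b| * (√a + √b) = |a - b| := hprod
    _ ≤ δ * (√b * √b) := by rwa [Real.mul_self_sqrt hb.le]
    _ ≤ δ * √b * (√a + √b) := by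
      rw [mul_assoc]; gcongr; exact le_add_of_nonneg_left (Real.sqrt_nonneg a)

theorem sqrt_le_mul_sqrt {x y c : ℝ} (hc : 0 ≤ c) (h : x ≤ c ^ 2 * y) : √x ≤ c * √y := by
  calc √x ≤ √(c ^ 2 * y) := Real.sqrt_le_sqrt h
    _ = c * √y := by rw [Real.sqrt_mul (sq_nonneg c), Real.sqrt_sq hc]

theorem EuclideanSpace.norm_le_sum_norm {ι : Type*} [Fintype ι] (x : EuclideanSpace ℝ ι) :
    ‖x‖ ≤ ∑ i, ‖x i‖ := by
  rw [EuclideanSpace.norm_eq, Real.sqrt_le_left (by positivity)]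
  exact Finset.sum_sq_le_sq_sum_of_nonneg fun _ _ => norm_nonneg _

theorem abs_mul_sub_mul_le (u v p q : ℝ) : |u * p - v * q| ≤ |v| * |p - q| + |u - v| * |p| := by
  calc |u * p - v * q| = |v * (p - q) + (u - v) * p| := by ring_nf
    _ ≤ |v| * |p - q| + |u - v| * |p| := by
      rw [← abs_mul, ← abs_mul]; exact abs_add_le _ _

theorem abs_mul_sub_mul_le_add {u v p q X M : ℝ} (hv : 0 ≤ v) (hX : v * |p - q| ≤ X)
    (hp : |u - v| * |p| ≤ M) (hq : |u - v| * |q| ≤ M) :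
    |u * p - v * q| ≤ X + M ∧ |v * p - u * q| ≤ X + M := by
  have hpq := abs_mul_sub_mul_le u v p q
  have hqp := abs_mul_sub_mul_le u v q p
  rw [abs_of_nonneg hv] at hpq hqp
  rw [abs_sub_comm q p] at hqp
  exact ⟨by linarith, by rw [abs_sub_comm]; linarith⟩

section Gamma

variable {k t : ℤ}

theorem gammaCoeff_nonneg (i : ℤ) : 0 ≤ gammaCoeff k t i := by
  unfold gammaCoeff; split_ifs <;> simp

theorem gammaCoeff_le_one (ht : 0 ≤ t) {i : ℤ} : gammaCoeff k t i ≤ 1 := by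
  unfold gammaCoeff
  split_ifs with hi
  · have : (0 : ℝ) ≤ i / t := div_nonneg (by exact_mod_cast hi.1) (by exact_mod_cast ht)
    exact max_le (by linarith) zero_le_one
  · exact zero_le_one

theorem gammaCoeff_eq_zero_of_le (ht : 0 < t) {i : ℤ} (hti : t ≤ i) : gammaCoeff k t i = 0 := by
  unfold gammaCoeff
  split_ifs
  · have : (1 : ℝ) ≤ i / t := (one_le_div (by exact_mod_cast ht)).2 (by exact_mod_cast hti)
    exact max_eq_right (by linarith)
  · rfl

theorem gammaCoeff_eq_max (ht : 0 < t) (htk : t ≤ k) {i : ℤ} (hi : 0 ≤ i) :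
    gammaCoeff k t i = max (1 - (i : ℝ) / t) 0 := by
  by_cases hik : i ≤ k
  · exact if_pos ⟨hi, hik⟩
  · have : (1 : ℝ) ≤ i / t := (one_le_div (by exact_mod_cast ht)).2 (by norm_cast; omega)
    rw [gammaCoeff_eq_zero_of_le ht (by omega), max_eq_right (by linarith)]

theorem abs_gammaCoeff_succ_sub_le (ht : 0 < t) (htk : t ≤ k) {i : ℤ} (hi : 0 ≤ i) :
    |gammaCoeff k t (i + 1) - gammaCoeff k t i| ≤ 1 / t := by
  rw [gammaCoeff_eq_max ht htk hi, gammaCoeff_eq_max ht htk (by omega)]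
  refine (abs_max_sub_max_le_abs _ _ _).trans_eq ?_
  have ht' : (0 : ℝ) < t := by exact_mod_cast ht
  rw [show 1 - ((i + 1 : ℤ) : ℝ) / t - (1 - i / t) = -(1 / t) by push_cast; field_simp; ring,
    abs_neg, abs_of_pos (by positivity)]

theorem gammaCoeff_mul_le (ht : 0 < t) {j : ℤ} {x X : ℝ} (hx : 0 ≤ x) (hX : 0 ≤ X)
    (h : (j : ℝ) < t → x ≤ X) : gammaCoeff k t j * x ≤ X := by
  by_cases hjt : (j : ℝ) < t
  · exact (mul_le_of_le_one_left hx (gammaCoeff_le_one ht.le)).trans (h hjt)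
  · rwa [gammaCoeff_eq_zero_of_le ht (by exact_mod_cast not_lt.1 hjt), zero_mul]

end Gamma

noncomputable def kappaFactor (N a κ : ℝ) : ℝ := (κ - a) * (N - κ - a) / κ

section KappaFactor

variable {N a K E : ℝ}

theorem kappaFactor_le {κ : ℝ} (ha : 0 ≤ a) (haκ : a ≤ κ) (hκN : κ + a ≤ N) :
    kappaFactor N a κ ≤ N := by
  rcases (ha.trans haκ).eq_or_lt with rfl | hκ
  · rw [kappaFactor, div_zero]
    linarith
  rw [kappaFactor, div_le_iff₀ hκ]
  nlinarith [mul_le_mul (by linarith : κ - a ≤ κ) (by linarith : N - κ - a ≤ N)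
    (by linarith) hκ.le]

theorem div_three_le_kappaFactor (ha : 0 ≤ a) (haK : 5 * a ≤ K) (hKN : 5 * K ≤ N) (hK : 0 < K) :
    N / 3 ≤ kappaFactor N a K := by
  rw [kappaFactor, le_div_iff₀ hK]
  nlinarith [mul_le_mul (by linarith : 4 / 5 * K ≤ K - a) (by linarith : 3 / 5 * N ≤ N - K - a)
    (by linarith) (by linarith)]

theorem kappaFactor_sub_kappaFactor (hK : 0 < K) (hE : 0 ≤ E) :
    kappaFactor N a ((1 + E) * K) - kappaFactor N a K = E * (a * (N - a) / ((1 + E) * K) - K) := by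
  unfold kappaFactor
  field_simp
  ring

theorem abs_kappaFactor_sub_le (ha : 0 ≤ a) (haK : 5 * a ≤ K) (hKN : 5 * K ≤ N) (hK : 0 < K)
    (hE : 0 ≤ E) :
    |kappaFactor N a ((1 + E) * K) - kappaFactor N a K| ≤
      3 * E * (K / N + a / K) * kappaFactor N a K := by
  have hN : 0 < N := by linarith
  have hlow := div_three_le_kappaFactor ha haK hKN hK
  have hx : a * (N - a) / ((1 + E) * K) ≤ a * N / K :=
    div_le_div₀ (by positivity) (by nlinarith) hK (by nlinarith)
  have hx0 : 0 ≤ a * (N - a) / ((1 + E) * K) := div_nonneg (by nlinarith) (by positivity)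
  have hbound : |a * (N - a) / ((1 + E) * K) - K| ≤ 3 * (K / N + a / K) * kappaFactor N a K :=
    calc |a * (N - a) / ((1 + E) * K) - K| ≤ K + a * N / K := abs_le.2 ⟨by linarith, by linarith⟩
      _ = 3 * (K / N + a / K) * (N / 3) := by field_simp
      _ ≤ 3 * (K / N + a / K) * kappaFactor N a K := by gcongr
  rw [kappaFactor_sub_kappaFactor hK hE, abs_mul, abs_of_nonneg hE]
  linarith [mul_le_mul_of_nonneg_left hbound hE]

theorem abs_sqrt_mul_kappaFactor_sub_le {P : ℝ} (hP : 0 ≤ P) (hPN : P * N ≤ 4) (ha : 0 ≤ a)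
    (haK : 5 * a ≤ K) (hKN : 5 * K ≤ N) (hK : 0 < K) (hE : 0 ≤ E) (hE1 : E ≤ 1) :
    |√(P * kappaFactor N a ((1 + E) * K)) - √(P * kappaFactor N a K)| ≤
      6 * E * (√(K / N) + √(a / K)) := by
  have hN : 0 < N := by linarith
  have hg : 0 ≤ kappaFactor N a K := (div_pos hN three_pos).le.trans
    (div_three_le_kappaFactor ha haK hKN hK)
  have hg' : 0 ≤ kappaFactor N a ((1 + E) * K) :=
    div_nonneg (mul_nonneg (by nlinarith) (by nlinarith)) (by positivity)
  have hrel : |P * kappaFactor N a ((1 + E) * K) - P * kappaFactor N a K| ≤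
      3 * E * (K / N + a / K) * (P * kappaFactor N a K) := by
    rw [← mul_sub, abs_mul, abs_of_nonneg hP, mul_left_comm]
    exact mul_le_mul_of_nonneg_left (abs_kappaFactor_sub_le ha haK hKN hK hE) hP
  have hle : √(P * kappaFactor N a K) ≤ 2 := by
    rw [Real.sqrt_le_left zero_le_two]
    nlinarith [mul_le_mul_of_nonneg_left (kappaFactor_le ha (by linarith) (by linarith) :
      kappaFactor N a K ≤ N) hP]
  have hKN' : K / N ≤ √(K / N) := Real.le_sqrt_self_iff.2 ((div_le_one hN).2 (by linarith))
  have haK' : a / K ≤ √(a / K) := Real.le_sqrt_self_iff.2 ((div_le_one hK).2 (by linarith))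
  calc _ ≤ 3 * E * (K / N + a / K) * √(P * kappaFactor N a K) :=
        abs_sqrt_sub_sqrt_le_mul_sqrt (mul_nonneg hP hg') (mul_nonneg hP hg) hrel
    _ ≤ 3 * E * (K / N + a / K) * 2 := by gcongr
    _ ≤ 6 * E * (√(K / N) + √(a / K)) := by nlinarith

end KappaFactor

section PhiComponents

variable {n j : ℤ} {K E : ℝ}

theorem phi0_eq_sqrt_mul_kappaFactor (n j : ℤ) (κ : ℝ) :
    phi0 n j κ = √((j : ℝ) / ((n - 2 * j + 2) * (n - 2 * j + 1)) * kappaFactor n (j - 1) κ) := by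
  unfold phi0 kappaFactor
  rw [div_mul_div_comm]
  congr 2
  ring

theorem phi3_eq_sqrt_mul_kappaFactor (n j : ℤ) (κ : ℝ) :
    phi3 n j κ = √(((n : ℝ) - j + 1) / ((n - 2 * j + 1) * (n - 2 * j)) * kappaFactor n j κ) := by
  unfold phi3 kappaFactor
  rw [div_mul_div_comm]
  congr 2
  ring

theorem phi0_nonneg (n j : ℤ) (κ : ℝ) : 0 ≤ phi0 n j κ := Real.sqrt_nonneg _

theorem phi3_nonneg (n j : ℤ) (κ : ℝ) : 0 ≤ phi3 n j κ := Real.sqrt_nonneg _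

theorem phi0_zero (n : ℤ) (κ : ℝ) : phi0 n 0 κ = 0 := by
  simp [phi0]

theorem phi0_coeff_mul_le (hj : 0 ≤ (j : ℝ)) (hjn : 4 * (j : ℝ) ≤ n) :
    (j : ℝ) / ((n - 2 * j + 2) * (n - 2 * j + 1)) * n ≤ 4 := by
  rcases hj.eq_or_lt with hj0 | hj0
  · rw [← hj0]; norm_num
  rw [div_mul_eq_mul_div, div_le_iff₀ (by nlinarith)]
  nlinarith

theorem phi3_coeff_mul_le (hj : 0 ≤ (j : ℝ)) (hjn : 4 * (j : ℝ) ≤ n) (hn : 0 < (n : ℝ)) :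
    ((n : ℝ) - j + 1) / ((n - 2 * j + 1) * (n - 2 * j)) * n ≤ 4 := by
  rw [div_mul_eq_mul_div, div_le_iff₀ (by nlinarith)]
  nlinarith

theorem phi0_le_two {κ : ℝ} (hj : 1 ≤ (j : ℝ)) (hjκ : j ≤ κ) (hκn : 2 * κ ≤ n)
    (hjn : 4 * (j : ℝ) ≤ n) : phi0 n j κ ≤ 2 := by
  rw [phi0_eq_sqrt_mul_kappaFactor, Real.sqrt_le_left zero_le_two]
  have hP := phi0_coeff_mul_le (by linarith) hjn
  have hg := kappaFactor_le (N := n) (by linarith : (0 : ℝ) ≤ j - 1) (by linarith)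
    (by linarith : κ + (j - 1) ≤ n)
  have hP0 : (0 : ℝ) ≤ j / ((n - 2 * j + 2) * (n - 2 * j + 1)) :=
    div_nonneg (by linarith) (mul_nonneg (by linarith) (by linarith))
  nlinarith [mul_le_mul_of_nonneg_left hg hP0]

theorem phi3_le_two {κ : ℝ} (hj : 0 ≤ (j : ℝ)) (hjκ : j ≤ κ) (hκn : 2 * κ ≤ n) (hκ : 0 < κ)
    (hjn : 4 * (j : ℝ) ≤ n) : phi3 n j κ ≤ 2 := by
  rw [phi3_eq_sqrt_mul_kappaFactor, Real.sqrt_le_left zero_le_two]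
  have hP := phi3_coeff_mul_le hj hjn (by linarith)
  have hg := kappaFactor_le (N := n) hj hjκ (by linarith)
  have hP0 : (0 : ℝ) ≤ (n - j + 1) / ((n - 2 * j + 1) * (n - 2 * j)) :=
    div_nonneg (by linarith) (mul_nonneg (by linarith) (by linarith))
  nlinarith [mul_le_mul_of_nonneg_left hg hP0]

theorem abs_phi0_sub_le (hj : 1 ≤ (j : ℝ)) (hjK : 5 * (j : ℝ) ≤ K) (hKn : 5 * K ≤ n)
    (hE : 0 ≤ E) (hE1 : E ≤ 1) :
    |phi0 n j ((1 + E) * K) - phi0 n j K| ≤ 6 * E * (√(K / n) + √(j / K)) := by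
  rw [phi0_eq_sqrt_mul_kappaFactor, phi0_eq_sqrt_mul_kappaFactor]
  have hP0 : (0 : ℝ) ≤ j / ((n - 2 * j + 2) * (n - 2 * j + 1)) :=
    div_nonneg (by linarith) (mul_nonneg (by linarith) (by linarith))
  refine (abs_sqrt_mul_kappaFactor_sub_le hP0 (phi0_coeff_mul_le (by linarith) (by linarith))
    (by linarith) (by linarith) hKn (by linarith) hE hE1).trans ?_
  gcongr <;> linarith

theorem abs_phi3_sub_le (hj : 0 ≤ (j : ℝ)) (hjK : 5 * (j : ℝ) ≤ K) (hKn : 5 * K ≤ n) (hK : 0 < K)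
    (hE : 0 ≤ E) (hE1 : E ≤ 1) :
    |phi3 n j ((1 + E) * K) - phi3 n j K| ≤ 6 * E * (√(K / n) + √(j / K)) := by
  rw [phi3_eq_sqrt_mul_kappaFactor, phi3_eq_sqrt_mul_kappaFactor]
  have hP0 : (0 : ℝ) ≤ (n - j + 1) / ((n - 2 * j + 1) * (n - 2 * j)) :=
    div_nonneg (by linarith) (mul_nonneg (by linarith) (by linarith))
  exact abs_sqrt_mul_kappaFactor_sub_le hP0 (phi3_coeff_mul_le hj (by linarith) (by linarith))
    hj hjK hKn hK hE hE1

end PhiComponents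

theorem abs_phi1_sub_le {n : ℤ} {K E : ℝ} (hKn : 0 ≤ K / n) (hE : 0 ≤ E) :
    |phi1 n ((1 + E) * K) - phi1 n K| ≤ E * √(K / n) := by
  refine abs_sqrt_sub_sqrt_le_mul_sqrt (by rw [mul_div_assoc]; positivity) hKn ?_
  rw [mul_div_assoc, ← sub_one_mul, add_sub_cancel_left, abs_mul, abs_of_nonneg hE,
    abs_of_nonneg hKn]

noncomputable def centredKappaFactor (N κ : ℝ) : ℝ := (N - 2 * κ) ^ 2 / (N * κ)

section CentredKappaFactor

variable {N K E : ℝ}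

theorem centredKappaFactor_le (hK : 0 < K) (hKN : 2 * K ≤ N) : centredKappaFactor N K ≤ N / K := by
  have hsq : (N - 2 * K) ^ 2 ≤ N ^ 2 := by nlinarith
  rw [centredKappaFactor, div_le_div_iff₀ (by nlinarith) hK]
  nlinarith [mul_le_mul_of_nonneg_right hsq hK.le]

theorem abs_centredKappaFactor_sub_le (hK : 0 < K) (hKN : 5 * K ≤ N) (hE : 0 ≤ E) :
    |centredKappaFactor N ((1 + E) * K) - centredKappaFactor N K| ≤
      4 * E * centredKappaFactor N K := by
  have hN : 0 < N := by linarith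
  have hdiff : centredKappaFactor N ((1 + E) * K) - centredKappaFactor N K =
      E * (4 * K / N - N / ((1 + E) * K)) := by
    unfold centredKappaFactor
    field_simp
    ring
  have hx : N / ((1 + E) * K) ≤ N / K := div_le_div_of_nonneg_left hN.le hK (by nlinarith)
  have hbound : |4 * K / N - N / ((1 + E) * K)| ≤ 4 * centredKappaFactor N K :=
    calc |4 * K / N - N / ((1 + E) * K)| ≤ 4 * K / N + N / K :=
          abs_le.2 ⟨by linarith [div_nonneg (by linarith : 0 ≤ 4 * K) hN.le],
            by linarith [div_nonneg hN.le (by positivity : 0 ≤ (1 + E) * K)]⟩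
      _ ≤ 4 * centredKappaFactor N K := by
        rw [centredKappaFactor, div_add_div _ _ hN.ne' hK.ne', mul_div_assoc',
          div_le_div_iff₀ (by positivity) (by positivity)]
        have hsq : 4 * K * K + N * N ≤ 4 * (N - 2 * K) ^ 2 := by nlinarith
        nlinarith [mul_le_mul_of_nonneg_right hsq (mul_pos hN hK).le]
  rw [hdiff, abs_mul, abs_of_nonneg hE]
  linarith [mul_le_mul_of_nonneg_left hbound hE]

end CentredKappaFactor

section PhiTwo

variable {n j : ℤ} {K E : ℝ}

theorem phi2_eq_sqrt {κ : ℝ} (hκ : 0 ≤ κ) (hκn : 2 * κ ≤ n) :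
    phi2 n j κ = √(centredKappaFactor n κ *
      ((j : ℝ) * (n - j + 1) / ((n - 2 * j + 2) * (n - 2 * j)))) := by
  rw [phi2, centredKappaFactor, Real.sqrt_mul (div_nonneg (sq_nonneg _) (by nlinarith)),
    Real.sqrt_div (sq_nonneg _), Real.sqrt_sq (by linarith)]

theorem phi2_coeff_le (hj : 0 ≤ (j : ℝ)) (hjn : 4 * (j : ℝ) ≤ n) (hn : 0 < (n : ℝ)) :
    (j : ℝ) * (n - j + 1) / ((n - 2 * j + 2) * (n - 2 * j)) ≤ 8 * j / n := by
  have h : ((n : ℝ) - j + 1) * n ≤ 8 * ((n - 2 * j + 2) * (n - 2 * j)) := by nlinarith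
  rw [div_le_div_iff₀ (by nlinarith) hn]
  nlinarith [mul_le_mul_of_nonneg_left h hj]

theorem abs_phi2_sub_le (hj : 0 ≤ (j : ℝ)) (hjK : 5 * (j : ℝ) ≤ K) (hKn : 5 * K ≤ n) (hK : 0 < K)
    (hE : 0 ≤ E) (hE1 : E ≤ 1) :
    |phi2 n j ((1 + E) * K) - phi2 n j K| ≤ 12 * E * √(j / K) := by
  have hn : (0 : ℝ) < n := by linarith
  set S : ℝ := (j : ℝ) * (n - j + 1) / ((n - 2 * j + 2) * (n - 2 * j))
  have hS : 0 ≤ S :=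
    div_nonneg (mul_nonneg hj (by linarith)) (mul_nonneg (by linarith) (by linarith))
  have hc : 0 ≤ centredKappaFactor n K := div_nonneg (sq_nonneg _) (by nlinarith)
  have hc' : 0 ≤ centredKappaFactor n ((1 + E) * K) :=
    div_nonneg (sq_nonneg _) (mul_nonneg (by linarith) (by positivity))
  have hrel : |centredKappaFactor n ((1 + E) * K) * S - centredKappaFactor n K * S| ≤
      4 * E * (centredKappaFactor n K * S) := by
    rw [← sub_mul, abs_mul, abs_of_nonneg hS, ← mul_assoc]
    exact mul_le_mul_of_nonneg_right (abs_centredKappaFactor_sub_le (by linarith) hKn hE) hS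
  have hsize : √(centredKappaFactor n K * S) ≤ 3 * √(j / K) := by
    refine sqrt_le_mul_sqrt zero_le_three ?_
    calc centredKappaFactor n K * S ≤ n / K * (8 * j / n) :=
          mul_le_mul (centredKappaFactor_le (by linarith) (by linarith))
            (phi2_coeff_le hj (by linarith) hn) hS (div_nonneg hn.le hK.le)
      _ = 8 * (j / K) := by field_simp
      _ ≤ 3 ^ 2 * (j / K) := by gcongr; norm_num
  rw [phi2_eq_sqrt (by positivity) (by nlinarith), phi2_eq_sqrt (by positivity) (by linarith)]
  calc _ ≤ 4 * E * √(centredKappaFactor n K * S) :=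
        abs_sqrt_sub_sqrt_le_mul_sqrt (mul_nonneg hc' hS) (mul_nonneg hc hS) hrel
    _ ≤ 4 * E * (3 * √(j / K)) := by gcongr
    _ = 12 * E * √(j / K) := by ring

end PhiTwo

section Assembly

variable {n k t j : ℤ}

theorem gammaCoeff_mul_abs_phi_sub_le {ε : ℝ} (ht : 0 < t) (htk : 5 * t ≤ k) (hkn : 5 * k ≤ n)
    (hj : 0 ≤ j) (hε : 0 ≤ ε) (hε1 : ε ≤ 1) :
    gammaCoeff k t j * |phi0 n j ((1 + ε) * k) - phi0 n j k| ≤ 6 * ε * (√(k / n) + √(t / k)) ∧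
    gammaCoeff k t j * |phi1 n ((1 + ε) * k) - phi1 n k| ≤ ε * √(k / n) ∧
    gammaCoeff k t j * |phi2 n j ((1 + ε) * k) - phi2 n j k| ≤ 12 * ε * √(t / k) ∧
    gammaCoeff k t j * |phi3 n j ((1 + ε) * k) - phi3 n j k| ≤
      6 * ε * (√(k / n) + √(t / k)) := by
  have hT : (0 : ℝ) < t := by exact_mod_cast ht
  have hTK : 5 * (t : ℝ) ≤ k := by exact_mod_cast htk
  have hKN : 5 * (k : ℝ) ≤ n := by exact_mod_cast hkn
  have hJ : (0 : ℝ) ≤ j := by exact_mod_cast hj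
  have hK : (0 : ℝ) < k := by linarith
  have hsmall : (j : ℝ) < t → 5 * (j : ℝ) ≤ k ∧ √(j / k) ≤ √(t / k) := fun hjt =>
    ⟨by linarith, Real.sqrt_le_sqrt (div_le_div_of_nonneg_right hjt.le hK.le)⟩
  refine ⟨gammaCoeff_mul_le ht (abs_nonneg _) (by positivity) fun hjt => ?_,
    (mul_le_of_le_one_left (abs_nonneg _) (gammaCoeff_le_one ht.le)).trans
      (abs_phi1_sub_le (div_nonneg hK.le (by linarith)) hε),
    gammaCoeff_mul_le ht (abs_nonneg _) (by positivity) fun hjt => ?_,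
    gammaCoeff_mul_le ht (abs_nonneg _) (by positivity) fun hjt => ?_⟩ <;>
  obtain ⟨h5j, hsqrt⟩ := hsmall hjt
  · rcases hj.eq_or_lt with rfl | hj1
    · simp only [phi0_zero, sub_self, abs_zero]
      positivity
    · refine (abs_phi0_sub_le (by exact_mod_cast hj1) h5j hKN hε hε1).trans ?_
      gcongr
  · exact (abs_phi2_sub_le hJ h5j hKN hK hε hε1).trans (by gcongr)
  · exact (abs_phi3_sub_le hJ h5j hKN hK hε hε1).trans (by gcongr)

theorem abs_gammaCoeff_sub_mul_phi_le {κ : ℝ} (ht : 0 < t) (htk : t ≤ k) (hj : 0 ≤ j)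
    (hjκ : j ≤ κ) (hκn : 2 * κ ≤ n) (hjn : 4 * (j : ℝ) ≤ n) (hκ : 0 < κ) :
    |gammaCoeff k t (j - 1) - gammaCoeff k t j| * |phi0 n j κ| ≤ 1 / t * 2 ∧
    |gammaCoeff k t (j + 1) - gammaCoeff k t j| * |phi3 n j κ| ≤ 1 / t * 2 := by
  constructor
  · rcases hj.eq_or_lt with rfl | hj1
    · simp only [phi0_zero, abs_zero, mul_zero]
      positivity
    have hjump := abs_gammaCoeff_succ_sub_le (k := k) ht htk (show 0 ≤ j - 1 by omega)
    rw [sub_add_cancel, abs_sub_comm] at hjump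
    rw [abs_of_nonneg (phi0_nonneg n j κ)]
    exact mul_le_mul hjump (phi0_le_two (by exact_mod_cast hj1) hjκ hκn hjn) (phi0_nonneg n j κ)
      (by positivity)
  · rw [abs_of_nonneg (phi3_nonneg n j κ)]
    exact mul_le_mul (abs_gammaCoeff_succ_sub_le ht htk hj)
      (phi3_le_two (by exact_mod_cast hj) hjκ hκn hκ hjn) (phi3_nonneg n j κ) (by positivity)

end Assembly

theorem norm_phiTildeVec_sub_smul_phiVec_le (n k t j : ℤ) (κ K : ℝ) :
    ‖phiTildeVec n k t j κ - gammaCoeff k t j • phiVec n j K‖ ≤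
      |gammaCoeff k t (j - 1) * phi0 n j κ - gammaCoeff k t j * phi0 n j K| +
      |gammaCoeff k t j * phi1 n κ - gammaCoeff k t j * phi1 n K| +
      |gammaCoeff k t j * phi2 n j κ - gammaCoeff k t j * phi2 n j K| +
      |gammaCoeff k t (j + 1) * phi3 n j κ - gammaCoeff k t j * phi3 n j K| :=
  (EuclideanSpace.norm_le_sum_norm _).trans_eq (by simp [Fin.sum_univ_four, phiTildeVec, phiVec])

theorem norm_smul_phiVec_sub_phiTildeVec_le (n k t j : ℤ) (κ K : ℝ) :
    ‖gammaCoeff k t j • phiVec n j κ - phiTildeVec n k t j K‖ ≤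
      |gammaCoeff k t j * phi0 n j κ - gammaCoeff k t (j - 1) * phi0 n j K| +
      |gammaCoeff k t j * phi1 n κ - gammaCoeff k t j * phi1 n K| +
      |gammaCoeff k t j * phi2 n j κ - gammaCoeff k t j * phi2 n j K| +
      |gammaCoeff k t j * phi3 n j κ - gammaCoeff k t (j + 1) * phi3 n j K| :=
  (EuclideanSpace.norm_le_sum_norm _).trans_eq (by simp [Fin.sum_univ_four, phiTildeVec, phiVec])

/-- `‖φ̃'_j − γ_j·φ_j‖ ≤ C·(ε·sqrt(k/n) + ε·sqrt(t/k) + 1/t)` and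
`‖γ_j·φ'_j − φ̃_j‖ ≤ C·(ε·sqrt(k/n) + ε·sqrt(t/k) + 1/t)`, where `k' = (1+ε)k`. -/
theorem phiTilde_difference_bound :
    ∃ C : ℝ, 0 < C ∧ ∀ (n k t j : ℤ) (ε : ℝ),
      1 ≤ k → 5 * k ≤ n → 1 ≤ t → 5 * t ≤ k → 0 ≤ j → j ≤ k →
      1 / (k : ℝ) ≤ ε → ε ≤ 1 →
      ‖phiTildeVec n k t j ((1 + ε) * (k : ℝ)) - gammaCoeff k t j • phiVec n j (k : ℝ)‖ ≤
          C * (ε * Real.sqrt ((k : ℝ) / (n : ℝ)) + ε * Real.sqrt ((t : ℝ) / (k : ℝ))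
            + 1 / (t : ℝ)) ∧
      ‖gammaCoeff k t j • phiVec n j ((1 + ε) * (k : ℝ)) - phiTildeVec n k t j (k : ℝ)‖ ≤
          C * (ε * Real.sqrt ((k : ℝ) / (n : ℝ)) + ε * Real.sqrt ((t : ℝ) / (k : ℝ))
            + 1 / (t : ℝ)) := by
  refine ⟨24, by norm_num, fun n k t j ε _ hkn ht htk hj hjk hεk hε1 => ?_⟩
  have hK : (5 : ℝ) ≤ k := by exact_mod_cast (show 5 ≤ k by omega)
  have hKN : 5 * (k : ℝ) ≤ n := by exact_mod_cast hkn
  have hJK : (j : ℝ) ≤ k := by exact_mod_cast hjk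
  have hε : 0 ≤ ε := (one_div_pos.2 (by linarith)).le.trans hεk
  have hκ : (k : ℝ) ≤ (1 + ε) * k ∧ (1 + ε) * k ≤ 2 * k := ⟨by nlinarith, by nlinarith⟩
  have hγ := gammaCoeff_nonneg (k := k) (t := t) j
  obtain ⟨hw0, hw1, hw2, hw3⟩ :=
    gammaCoeff_mul_abs_phi_sub_le (show 0 < t by omega) htk hkn hj hε hε1
  obtain ⟨hjump0, hjump3⟩ := abs_gammaCoeff_sub_mul_phi_le (show 0 < t by omega)
    (show t ≤ k by omega) hj (hJK.trans hκ.1) (show 2 * ((1 + ε) * k) ≤ n by linarith)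
    (by linarith) (by linarith)
  obtain ⟨hjump0', hjump3'⟩ := abs_gammaCoeff_sub_mul_phi_le (show 0 < t by omega)
    (show t ≤ k by omega) hj hJK (show 2 * (k : ℝ) ≤ n by linarith) (by linarith) (by linarith)
  obtain ⟨h0, h0'⟩ := abs_mul_sub_mul_le_add hγ hw0 hjump0 hjump0'
  obtain ⟨h1, h1'⟩ := abs_mul_sub_mul_le_add (u := gammaCoeff k t j) (M := 0) hγ hw1
    (by simp) (by simp)
  obtain ⟨h2, h2'⟩ := abs_mul_sub_mul_le_add (u := gammaCoeff k t j) (M := 0) hγ hw2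
    (by simp) (by simp)
  obtain ⟨h3, h3'⟩ := abs_mul_sub_mul_le_add hγ hw3 hjump3 hjump3'
  have hεkn : 0 ≤ ε * √(k / n) := by positivity
  have htinv : 0 ≤ 1 / (t : ℝ) := by positivity
  exact ⟨(norm_phiTildeVec_sub_smul_phiVec_le ..).trans (by linarith),
    (norm_smul_phiVec_sub_phiTildeVec_le ..).trans (by linarith)⟩
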